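/- Let X = L¹(Σ,ν), A the generator of a substochastic C₀-semigroup on X. Suppose f ∈ D(A) and write g = (I - A)f with positive and negative parts g⁺, g⁻; set f₁^± = (I - A)⁻¹ g^±. Then f = f₁⁺ - f₁⁻, f₁^± ∈ D(A)₊, and ‖A f₁^±‖ ≤ 2‖g^±‖; moreover ‖g⁺‖ + ‖g⁻‖ ≤ ‖f‖ + ‖A f‖. -/

import Mathlib

/-
Since `(I - A)` maps `f - f₁⁺ + f₁⁻` to `g - g⁺ + g⁻ = 0`, the decomposition `f = f₁⁺ - f₁⁻`
amounts to injectivity of `I - A` on `D(A)`, which holds because the generator of a contraction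
semigroup is dissipative: `‖x‖ ≤ ‖x - A x‖`. The bound on `A f₁^±` follows from
`A f₁^± = f₁^± - g^±` and `‖f₁^±‖ ≤ ‖g^±‖`; the last estimate is `‖g⁺‖ + ‖g⁻‖ = ‖g‖` in `L¹`.
-/

open MeasureTheory Filter Topology

namespace MeasureTheory.L1

variable {α : Type*} [MeasurableSpace α] {ν : Measure α}

theorem norm_add_of_nonneg {f g : α →₁[ν] ℝ} (hf : 0 ≤ f) (hg : 0 ≤ g) :
    ‖f + g‖ = ‖f‖ + ‖g‖ := by
  simp only [norm_eq_integral_norm]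
  rw [← MeasureTheory.integral_add (integrable_coeFn f).norm (integrable_coeFn g).norm]
  refine integral_congr_ae ?_
  filter_upwards [Lp.coeFn_add f g, (Lp.coeFn_nonneg f).2 hf, (Lp.coeFn_nonneg g).2 hg]
    with x hx hfx hgx
  simp only [hx, Pi.add_apply, Real.norm_of_nonneg (add_nonneg hfx hgx),
    Real.norm_of_nonneg hfx, Real.norm_of_nonneg hgx]

theorem norm_posPart_add_norm_negPart (g : α →₁[ν] ℝ) : ‖g⁺‖ + ‖g⁻‖ = ‖g‖ := by
  rw [← norm_add_of_nonneg (posPart_nonneg g) (negPart_nonneg g), posPart_add_negPart,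
    norm_abs_eq_norm]

end MeasureTheory.L1

theorem norm_le_norm_sub_of_tendsto_inv_smul_sub {E : Type*} [NormedAddCommGroup E]
    [NormedSpace ℝ E] {T : ℝ → E → E} {x z : E} (hT : ∀ t, 0 < t → ‖T t x‖ ≤ ‖x‖)
    (hz : Tendsto (fun t : ℝ => t⁻¹ • (T t x - x)) (𝓝[>] 0) (𝓝 z)) : ‖x‖ ≤ ‖x - z‖ := by
  refine ge_of_tendsto (hz.const_sub x).norm ?_
  filter_upwards [self_mem_nhdsWithin] with t (ht : 0 < t)
  have hrewrite : x - t⁻¹ • (T t x - x) = t⁻¹ • ((1 + t) • x - T t x) := by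
    rw [smul_sub, smul_sub, add_smul, one_smul, smul_add, inv_smul_smul₀ ht.ne']
    abel
  calc ‖x‖ = t⁻¹ * ((1 + t) * ‖x‖ - ‖x‖) := by field_simp; ring
    _ ≤ t⁻¹ * (‖(1 + t) • x‖ - ‖T t x‖) := by
        rw [norm_smul, Real.norm_of_nonneg (by linarith)]
        gcongr
        exact hT t ht
    _ ≤ t⁻¹ * ‖(1 + t) • x - T t x‖ := by gcongr; exact norm_sub_norm_le _ _
    _ = ‖x - t⁻¹ • (T t x - x)‖ := by
        rw [hrewrite, norm_smul, Real.norm_of_nonneg (inv_nonneg.2 ht.le)]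

theorem substochastic_resolvent_decomposition_general
    {α : Type*} [MeasurableSpace α] (ν : Measure α)
    (V : ℝ → Lp ℝ 1 ν →L[ℝ] Lp ℝ 1 ν)
    (hVcontr : ∀ t : ℝ, 0 ≤ t → ∀ g : Lp ℝ 1 ν, ‖V t g‖ ≤ ‖g‖)
    (DA : Set (Lp ℝ 1 ν)) (A : Lp ℝ 1 ν → Lp ℝ 1 ν)
    (hgen : ∀ f ∈ DA, Tendsto (fun h : ℝ => h⁻¹ • (V h f - f)) (𝓝[>] (0:ℝ)) (𝓝 (A f)))
    (R : Lp ℝ 1 ν → Lp ℝ 1 ν)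
    -- `R = (I - A)⁻¹`:
    (hRmem : ∀ h, R h ∈ DA)
    (hRright : ∀ h, R h - A (R h) = h)
    (hRpos : ∀ h : Lp ℝ 1 ν, 0 ≤ h → 0 ≤ R h)
    (hRcontr : ∀ h : Lp ℝ 1 ν, ‖R h‖ ≤ ‖h‖)
    (f : Lp ℝ 1 ν) (hf : f ∈ DA)
    (g : Lp ℝ 1 ν) (hg : g = f - A f) :
    f = R (g ⊔ 0) - R ((-g) ⊔ 0)
    ∧ R (g ⊔ 0) ∈ DA ∧ R ((-g) ⊔ 0) ∈ DA
    ∧ 0 ≤ R (g ⊔ 0) ∧ 0 ≤ R ((-g) ⊔ 0)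
    ∧ ‖A (R (g ⊔ 0))‖ ≤ 2 * ‖g ⊔ 0‖
    ∧ ‖A (R ((-g) ⊔ 0))‖ ≤ 2 * ‖(-g) ⊔ 0‖
    ∧ ‖g ⊔ 0‖ + ‖(-g) ⊔ 0‖ ≤ ‖f‖ + ‖A f‖ := by
  have hAR (h : Lp ℝ 1 ν) : A (R h) = R h - h :=
    (sub_sub_self (R h) (A (R h))).symm.trans (congrArg (R h - ·) (hRright h))
  have hnormAR (h : Lp ℝ 1 ν) : ‖A (R h)‖ ≤ 2 * ‖h‖ := by
    rw [hAR]
    linarith [norm_sub_le (R h) h, hRcontr h]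
  have hAf : A f = f - g := by rw [hg, sub_sub_cancel]
  set w := f - R g⁺ + R g⁻
  have hw : Tendsto (fun t : ℝ => t⁻¹ • (V t w - w)) (𝓝[>] 0) (𝓝 w) := by
    have hlin (t : ℝ) : t⁻¹ • (V t w - w) = t⁻¹ • (V t f - f) - t⁻¹ • (V t (R g⁺) - R g⁺)
        + t⁻¹ • (V t (R g⁻) - R g⁻) := by
      simp only [w, map_sub, map_add, smul_sub, smul_add]
      abel
    have hAw : A f - A (R g⁺) + A (R g⁻) = w := calc
      _ = w - (g - (g⁺ - g⁻)) := by rw [hAR, hAR, hAf]; simp only [w]; abel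
      _ = w := by rw [posPart_sub_negPart, sub_self, sub_zero]
    simpa only [hlin, hAw] using
      ((hgen f hf).sub (hgen _ (hRmem g⁺))).add (hgen _ (hRmem g⁻))
  have hw0 : w = 0 := norm_le_zero_iff.1 <| by
    simpa using norm_le_norm_sub_of_tendsto_inv_smul_sub (fun t ht ↦ hVcontr t ht.le w) hw
  refine ⟨?_, hRmem _, hRmem _, hRpos _ le_sup_right, hRpos _ le_sup_right, hnormAR _, hnormAR _,
    ?_⟩
  · exact sub_eq_zero.1 <| (by abel : f - (R g⁺ - R g⁻) = f - R g⁺ + R g⁻).trans hw0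
  · exact (L1.norm_posPart_add_norm_negPart g).trans_le (hg ▸ norm_sub_le f (A f))

/-- Let `X = L¹(Σ, ν)` and `A` (with domain `DA`) the generator of a substochastic
C₀-semigroup on `X`, so that `R = (I - A)⁻¹` is a positive contraction. For `f ∈ D(A)` write
`g = (I - A)f` with positive/negative parts `g⁺ = g ⊔ 0`, `g⁻ = (-g) ⊔ 0`, and set
`f₁^± = (I - A)⁻¹ g^±`. Then `f = f₁⁺ - f₁⁻`, `f₁^± ∈ D(A)₊`, `‖A f₁^±‖ ≤ 2‖g^±‖`, and
`‖g⁺‖ + ‖g⁻‖ ≤ ‖f‖ + ‖A f‖`. -/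
theorem substochastic_resolvent_decomposition
    {α : Type*} [MeasurableSpace α] (ν : Measure α)
    (V : ℝ → Lp ℝ 1 ν →L[ℝ] Lp ℝ 1 ν)
    (hV0 : V 0 = 1)
    (hVsemi : ∀ s t : ℝ, 0 ≤ s → 0 ≤ t → V (s + t) = (V s).comp (V t))
    (hVcont : ∀ f : Lp ℝ 1 ν, ContinuousOn (fun t => V t f) (Set.Ici 0))
    (hVpos : ∀ t : ℝ, 0 ≤ t → ∀ g : Lp ℝ 1 ν, 0 ≤ g → 0 ≤ V t g)
    (hVcontr : ∀ t : ℝ, 0 ≤ t → ∀ g : Lp ℝ 1 ν, ‖V t g‖ ≤ ‖g‖)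
    (DA : Set (Lp ℝ 1 ν)) (A : Lp ℝ 1 ν → Lp ℝ 1 ν)
    (hgen : ∀ f ∈ DA, Tendsto (fun h : ℝ => h⁻¹ • (V h f - f)) (𝓝[>] (0:ℝ)) (𝓝 (A f)))
    (R : Lp ℝ 1 ν → Lp ℝ 1 ν)
    -- `R = (I - A)⁻¹`:
    (hRmem : ∀ h, R h ∈ DA)
    (hRright : ∀ h, R h - A (R h) = h)
    (hRleft : ∀ f ∈ DA, R (f - A f) = f)
    (hRpos : ∀ h : Lp ℝ 1 ν, 0 ≤ h → 0 ≤ R h)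
    (hRcontr : ∀ h : Lp ℝ 1 ν, ‖R h‖ ≤ ‖h‖)
    (f : Lp ℝ 1 ν) (hf : f ∈ DA)
    (g : Lp ℝ 1 ν) (hg : g = f - A f) :
    f = R (g ⊔ 0) - R ((-g) ⊔ 0)
    ∧ R (g ⊔ 0) ∈ DA ∧ R ((-g) ⊔ 0) ∈ DA
    ∧ 0 ≤ R (g ⊔ 0) ∧ 0 ≤ R ((-g) ⊔ 0)
    ∧ ‖A (R (g ⊔ 0))‖ ≤ 2 * ‖g ⊔ 0‖
    ∧ ‖A (R ((-g) ⊔ 0))‖ ≤ 2 * ‖(-g) ⊔ 0‖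
    ∧ ‖g ⊔ 0‖ + ‖(-g) ⊔ 0‖ ≤ ‖f‖ + ‖A f‖ :=
  substochastic_resolvent_decomposition_general ν V hVcontr DA A hgen R hRmem hRright hRpos hRcontr
    f hf g hg
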